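/- There exists a decision-making mechanism with imperfect information that is an elected semi-epistemic dictatorship but is not epistemic-gap-free. (For instance, the mechanism N: agent A at the root hides straws, moving to node u_2 or u_3, which agent B cannot distinguish; B then picks action 0 or 1, selecting a straw whose length determines Yes/No oppositely at u_2 and u_3, or action 2, which yields outcome No at both nodes.) -/
import Mathlib


inductive Outcome where
  | yes : Outcome
  | no : Outcome
deriving DecidableEq

def Outcome.flip : Outcome → Outcome
  | .yes => .no
  | .no => .yes

/-- A decision-making mechanism (perfect information):
a finite rooted directed tree `(V, E)` with root `root`,
agents `A`, actions `Act`, available-action sets `Δ`,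
choice functions `τ`, and a leaf labelling `lab`. -/
structure Mech (V A Act : Type) where
  finV : Fintype V
  E : V → V → Prop
  root : V
  root_no_parent : ∀ v, ¬ E v root
  unique_parent : ∀ u v w, E u w → E v w → u = v
  reach : ∀ v, Relation.ReflTransGen E root v
  Δ : A → V → Set Act
  Δ_nonempty : ∀ a v, (∃ u, E v u) → (Δ a v).Nonempty
  τ : V → (A → Act) → V
  τ_child : ∀ v δ, (∃ u, E v u) → (∀ b, δ b ∈ Δ b v) → E v (τ v δ)
  lab : V → Outcome

namespace Mech

variable {V A Act : Type}

def IsLeaf (M : Mech V A Act) (v : V) : Prop := ∀ u, ¬ M.E v u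

def IsDecision (M : Mech V A Act) (v : V) : Prop := ∃ u, M.E v u

/-- `Next a d v` : the set of children the process can move to from `v`
when agent `a` chooses action `d`. -/
def Next (M : Mech V A Act) (a : A) (d : Act) (v : V) : Set V :=
  { u | ∃ δ : A → Act, (∀ b, δ b ∈ M.Δ b v) ∧ δ a = d ∧ u = M.τ v δ }

/-- `win_a(o)`: the smallest set containing all leaves labelled `o` and
closed under: if `Next a d v ⊆ win_a(o)` for some available action `d`
at a decision node `v`, then `v ∈ win_a(o)`. -/
inductive Win (M : Mech V A Act) (a : A) (o : Outcome) : V → Prop where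
  | leaf (v : V) : M.IsLeaf v → M.lab v = o → Win M a o v
  | step (v : V) (d : Act) : M.IsDecision v → d ∈ M.Δ a v →
      (∀ u ∈ M.Next a d v, Win M a o u) → Win M a o v

/-- A decision path starting at the root. -/
def RootPath (M : Mech V A Act) (l : List V) : Prop :=
  l.head? = some M.root ∧ l.Chain' M.E

/-- Agent `a` is (counterfactually) responsible at leaf `v`. -/
def Responsible (M : Mech V A Act) (a : A) (v : V) : Prop :=
  ∃ l : List V, M.RootPath l ∧ l.getLast? = some v ∧
    ∃ u ∈ l, M.IsDecision u ∧ M.Win a (M.lab v).flip u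

def GapFree (M : Mech V A Act) : Prop :=
  ∀ v, M.IsLeaf v → ∃ a, M.Responsible a v

def Dictator (M : Mech V A Act) (a : A) (v : V) : Prop :=
  M.Win a Outcome.yes v ∧ M.Win a Outcome.no v

def ElectedDictatorship (M : Mech V A Act) : Prop :=
  ∀ (l : List V) (v : V), M.RootPath l → l.getLast? = some v → M.IsLeaf v →
    ∃ u ∈ l, ∃ a, M.Dictator a u

end Mech

/-- A decision-making mechanism with imperfect information. -/
structure IMech (V A Act : Type) extends Mech V A Act where
  sim : A → V → V → Prop
  sim_equiv : ∀ a, Equivalence (sim a)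
  sim_decision : ∀ a u v, sim a u v → ((∃ w, E u w) ↔ (∃ w, E v w))
  sim_Δ : ∀ a u v, sim a u v → Δ a u = Δ a v

namespace IMech

variable {V A Act : Type}

/-- `Next a d ([v]_a)` : the union of `Next a d u` over all `u ∼_a v`. -/
def NextCl (M : IMech V A Act) (a : A) (d : Act) (v : V) : Set V :=
  { w | ∃ u, M.sim a v u ∧ w ∈ M.toMech.Next a d u }

/-- `ewin_a(o)`. -/
inductive EWin (M : IMech V A Act) (a : A) (o : Outcome) : V → Prop where
  | leaf (v : V) : M.toMech.IsLeaf v → M.lab v = o → EWin M a o v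
  | known (v : V) (d : Act) : M.toMech.IsDecision v → d ∈ M.Δ a v →
      (∀ w ∈ M.NextCl a d v, EWin M a o w) → EWin M a o v
  | blind (v : V) : M.toMech.IsDecision v →
      (∀ d ∈ M.Δ a v, ∀ w ∈ M.toMech.Next a d v, EWin M a o w) → EWin M a o v

/-- `uwin_a(o)`. -/
inductive UWin (M : IMech V A Act) (a : A) (o : Outcome) : V → Prop where
  | leaf (v : V) : M.toMech.IsLeaf v → M.lab v = o → UWin M a o v
  | known (v : V) (d : Act) : M.toMech.IsDecision v → d ∈ M.Δ a v →
      (∀ w ∈ M.NextCl a d v, UWin M a o w) → UWin M a o v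

def EpistemicallyResponsible (M : IMech V A Act) (a : A) (v : V) : Prop :=
  ∃ l : List V, M.toMech.RootPath l ∧ l.getLast? = some v ∧
    ∃ u ∈ l, M.toMech.IsDecision u ∧ M.EWin a (M.lab v).flip u

def EpistemicGapFree (M : IMech V A Act) : Prop :=
  ∀ v, M.toMech.IsLeaf v → ∃ a, M.EpistemicallyResponsible a v

def EpistemicDictator (M : IMech V A Act) (a : A) (v : V) : Prop :=
  M.EWin a Outcome.yes v ∧ M.EWin a Outcome.no v

def ElectedEpistemicDictatorship (M : IMech V A Act) : Prop :=
  ∀ (l : List V) (v : V), M.toMech.RootPath l → l.getLast? = some v →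
    M.toMech.IsLeaf v → ∃ u ∈ l, ∃ a, M.EpistemicDictator a u

def SemiEpistemicDictator (M : IMech V A Act) (a : A) (v : V) : Prop :=
  ∃ o : Outcome, M.EWin a o v ∧ M.toMech.Win a o.flip v

def ElectedSemiEpistemicDictatorship (M : IMech V A Act) : Prop :=
  ∀ (l : List V) (v : V), M.toMech.RootPath l → l.getLast? = some v →
    M.toMech.IsLeaf v → ∃ u ∈ l, ∃ a, M.SemiEpistemicDictator a u

end IMech

namespace Stmt18

/-- Edges of the mechanism: 0 is the root (agent A hides straws),
1 and 2 are B's decision nodes, 3–8 are leaves. -/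
def E9 : Fin 9 → Fin 9 → Prop := fun u v =>
  (u.val = 0 ∧ (v.val = 1 ∨ v.val = 2)) ∨
  (u.val = 1 ∧ (v.val = 3 ∨ v.val = 4 ∨ v.val = 5)) ∨
  (u.val = 2 ∧ (v.val = 6 ∨ v.val = 7 ∨ v.val = 8))

def τ9 : Fin 9 → (Bool → Fin 3) → Fin 9 := fun v δ =>
  if v.val = 0 then (if (δ false).val = 0 then ⟨1, by omega⟩ else ⟨2, by omega⟩)
  else if v.val = 1 then ⟨3 + (δ true).val, by omega⟩
  else if v.val = 2 then ⟨6 + (δ true).val, by omega⟩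
  else v

def lab9 : Fin 9 → Outcome := fun v =>
  if v.val = 3 ∨ v.val = 7 then Outcome.yes else Outcome.no

def sim9 : Bool → Fin 9 → Fin 9 → Prop := fun a u v =>
  u = v ∨ (a = true ∧ 1 ≤ u.val ∧ u.val ≤ 2 ∧ 1 ≤ v.val ∧ v.val ≤ 2)

lemma E9_cases {u v : Fin 9} (h : E9 u v) :
    (u.val = 0 ∧ 1 ≤ v.val ∧ v.val ≤ 2) ∨ (u.val = 1 ∧ 3 ≤ v.val ∧ v.val ≤ 5) ∨
    (u.val = 2 ∧ 6 ≤ v.val ∧ v.val ≤ 8) := by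
  unfold E9 at h
  omega

lemma dec12 {v : Fin 9} (h : 1 ≤ v.val ∧ v.val ≤ 2) : ∃ w, E9 v w := by
  refine ⟨⟨if v.val = 1 then 3 else 6, by split_ifs <;> omega⟩, ?_⟩
  unfold E9
  split_ifs with h1
  · exact Or.inr (Or.inl ⟨h1, by simp⟩)
  · exact Or.inr (Or.inr ⟨by omega, by simp⟩)

def N : IMech (Fin 9) Bool (Fin 3) where
  finV := inferInstance
  E := E9
  root := 0
  root_no_parent := by
    intro v h
    have h0 : (0 : Fin 9).val = 0 := rfl
    have := E9_cases h
    omega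
  unique_parent := by
    intro u v w h1 h2
    apply Fin.ext
    have := E9_cases h1
    have := E9_cases h2
    omega
  reach := by
    intro v
    have e01 : E9 0 1 := Or.inl ⟨rfl, Or.inl rfl⟩
    have e02 : E9 0 2 := Or.inl ⟨rfl, Or.inr rfl⟩
    have r1 : Relation.ReflTransGen E9 0 1 := Relation.ReflTransGen.single e01
    have r2 : Relation.ReflTransGen E9 0 2 := Relation.ReflTransGen.single e02
    fin_cases v
    · exact Relation.ReflTransGen.refl
    · exact r1
    · exact r2
    · exact r1.tail (Or.inr (Or.inl ⟨rfl, Or.inl rfl⟩))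
    · exact r1.tail (Or.inr (Or.inl ⟨rfl, Or.inr (Or.inl rfl)⟩))
    · exact r1.tail (Or.inr (Or.inl ⟨rfl, Or.inr (Or.inr rfl)⟩))
    · exact r2.tail (Or.inr (Or.inr ⟨rfl, Or.inl rfl⟩))
    · exact r2.tail (Or.inr (Or.inr ⟨rfl, Or.inr (Or.inl rfl)⟩))
    · exact r2.tail (Or.inr (Or.inr ⟨rfl, Or.inr (Or.inr rfl)⟩))
  Δ := fun _ _ => Set.univ
  Δ_nonempty := fun _ _ _ => ⟨0, trivial⟩
  τ := τ9
  τ_child := by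
    intro v δ hdec _
    obtain ⟨u, hu⟩ := hdec
    have hv := E9_cases hu
    have hv' : v.val = 0 ∨ v.val = 1 ∨ v.val = 2 := by omega
    unfold τ9 E9
    rcases hv' with h | h | h
    · rw [if_pos h]
      split_ifs
      · exact Or.inl ⟨h, Or.inl rfl⟩
      · exact Or.inl ⟨h, Or.inr rfl⟩
    · rw [if_neg (by omega), if_pos h]
      refine Or.inr (Or.inl ⟨h, ?_⟩)
      simp only [Fin.val_mk]
      omega
    · rw [if_neg (by omega), if_neg (by omega), if_pos h]
      refine Or.inr (Or.inr ⟨h, ?_⟩)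
      simp only [Fin.val_mk]
      omega
  lab := lab9
  sim := sim9
  sim_equiv := by
    intro a
    constructor
    · intro x; exact Or.inl rfl
    · intro x y h
      rcases h with h | ⟨h1, h2⟩
      · exact Or.inl h.symm
      · exact Or.inr ⟨h1, by tauto⟩
    · intro x y z hxy hyz
      rcases hxy with h | ⟨h1, h2⟩
      · rwa [h]
      · rcases hyz with h' | ⟨h1', h2'⟩
        · subst h'; exact Or.inr ⟨h1, h2⟩
        · exact Or.inr ⟨h1, by tauto⟩
  sim_decision := by
    intro a u v h
    rcases h with h | ⟨_, h1, h2, h3, h4⟩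
    · rw [h]
    · exact ⟨fun _ => dec12 ⟨h3, h4⟩, fun _ => dec12 ⟨h1, h2⟩⟩
  sim_Δ := fun _ _ _ _ => rfl

lemma leaf_of {v : Fin 9} (h : 3 ≤ v.val) : N.toMech.IsLeaf v := by
  intro u hu
  have := E9_cases hu
  omega

lemma dec_le {v : Fin 9} (h : N.toMech.IsDecision v) : v.val ≤ 2 := by
  obtain ⟨u, hu⟩ := h
  have := E9_cases hu
  omega

lemma sim_elim {a : Bool} {u v : Fin 9} (h : N.sim a u v) :
    u = v ∨ (1 ≤ u.val ∧ u.val ≤ 2 ∧ 1 ≤ v.val ∧ v.val ≤ 2) := by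
  rcases h with h | ⟨_, h⟩
  · exact Or.inl h
  · exact Or.inr h

lemma mem_next {a : Bool} {d : Fin 3} {u : Fin 9} (δ : Bool → Fin 3) (h : δ a = d) :
    τ9 u δ ∈ N.toMech.Next a d u :=
  ⟨δ, fun _ => trivial, h, rfl⟩

lemma next_elim {a : Bool} {d : Fin 3} {u w : Fin 9} (h : w ∈ N.toMech.Next a d u) :
    ∃ δ : Bool → Fin 3, δ a = d ∧ w = τ9 u δ := by
  obtain ⟨δ, _, h1, h2⟩ := h
  exact ⟨δ, h1, h2⟩

lemma tau_val0 {v : Fin 9} (hv : v.val = 0) (δ : Bool → Fin 3) :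
    (τ9 v δ).val = 1 ∨ (τ9 v δ).val = 2 := by
  unfold τ9; rw [if_pos hv]; split_ifs <;> simp

lemma tau_val1 {v : Fin 9} (hv : v.val = 1) (δ : Bool → Fin 3) :
    (τ9 v δ).val = 3 + (δ true).val := by
  unfold τ9; rw [if_neg (by omega), if_pos hv]

lemma tau_val2 {v : Fin 9} (hv : v.val = 2) (δ : Bool → Fin 3) :
    (τ9 v δ).val = 6 + (δ true).val := by
  unfold τ9; rw [if_neg (by omega), if_neg (by omega), if_pos hv]

lemma lab_no {v : Fin 9} (h3 : v.val ≠ 3) (h7 : v.val ≠ 7) : N.lab v = Outcome.no := by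
  show lab9 v = Outcome.no
  unfold lab9
  rw [if_neg (by tauto)]

lemma lab_yes {v : Fin 9} (h : v.val = 3 ∨ v.val = 7) : N.lab v = Outcome.yes := by
  show lab9 v = Outcome.yes
  unfold lab9
  rw [if_pos h]

/-- No node outside the two Yes-leaves is in `ewin_a(Yes)` for either agent. -/
lemma ewin_yes {a : Bool} {v : Fin 9} (h : N.EWin a Outcome.yes v) :
    v.val = 3 ∨ v.val = 7 := by
  induction h with
  | leaf v hl hlab =>
    by_contra hc
    push_neg at hc
    rw [lab_no hc.1 hc.2] at hlab
    exact Outcome.noConfusion hlab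
  | known v d hdec hd hall ih =>
    have hv : v.val = 0 ∨ v.val = 1 ∨ v.val = 2 := by have := dec_le hdec; omega
    rcases hv with hvv | hvv | hvv
    · -- v = root: any profile with δ a = d leads to node 1 or 2
      have hm : τ9 v (fun _ => d) ∈ N.NextCl a d v :=
        ⟨v, Or.inl rfl, mem_next _ rfl⟩
      have := ih _ hm
      have := tau_val0 hvv (fun _ => d)
      omega
    · -- v = node 1
      cases a with
      | false =>
        have hm : τ9 v (fun b => if b then 2 else d) ∈ N.NextCl false d v :=
          ⟨v, Or.inl rfl, mem_next _ rfl⟩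
        have := ih _ hm
        rw [tau_val1 hvv] at this
        simp at this
      | true =>
        fin_cases d
        · -- d = 0 : use the indistinguishable node 2, landing on leaf 6
          have hm : τ9 2 (fun _ => 0) ∈ N.NextCl true 0 v :=
            ⟨2, Or.inr ⟨rfl, by omega, by omega, by simp, by simp⟩, mem_next _ rfl⟩
          have := ih _ hm
          rw [tau_val2 (by simp)] at this
          simp at this
        · -- d = 1 : leaf 4
          have hm : τ9 v (fun _ => 1) ∈ N.NextCl true 1 v :=
            ⟨v, Or.inl rfl, mem_next _ rfl⟩
          have := ih _ hm
          rw [tau_val1 hvv] at this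
          simp at this
        · -- d = 2 : leaf 5
          have hm : τ9 v (fun _ => 2) ∈ N.NextCl true 2 v :=
            ⟨v, Or.inl rfl, mem_next _ rfl⟩
          have := ih _ hm
          rw [tau_val1 hvv] at this
          simp at this
    · -- v = node 2
      cases a with
      | false =>
        have hm : τ9 v (fun b => if b then 0 else d) ∈ N.NextCl false d v :=
          ⟨v, Or.inl rfl, mem_next _ rfl⟩
        have := ih _ hm
        rw [tau_val2 hvv] at this
        simp at this
      | true =>
        fin_cases d
        · have hm : τ9 v (fun _ => 0) ∈ N.NextCl true 0 v :=
            ⟨v, Or.inl rfl, mem_next _ rfl⟩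
          have := ih _ hm
          rw [tau_val2 hvv] at this
          simp at this
        · -- d = 1 : use node 1, landing on leaf 4
          have hm : τ9 1 (fun _ => 1) ∈ N.NextCl true 1 v :=
            ⟨1, Or.inr ⟨rfl, by omega, by omega, by simp, by simp⟩, mem_next _ rfl⟩
          have := ih _ hm
          rw [tau_val1 (by simp)] at this
          simp at this
        · have hm : τ9 v (fun _ => 2) ∈ N.NextCl true 2 v :=
            ⟨v, Or.inl rfl, mem_next _ rfl⟩
          have := ih _ hm
          rw [tau_val2 hvv] at this
          simp at this
  | blind v hdec hall ih =>
    have hv : v.val = 0 ∨ v.val = 1 ∨ v.val = 2 := by have := dec_le hdec; omega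
    rcases hv with hvv | hvv | hvv
    · have := ih 0 trivial _ (mem_next (u := v) (fun _ => 0) rfl)
      have := tau_val0 hvv (fun _ => 0)
      omega
    · have := ih 1 trivial _ (mem_next (u := v) (fun _ => 1) rfl)
      rw [tau_val1 hvv] at this
      simp at this
    · have := ih 0 trivial _ (mem_next (u := v) (fun _ => 0) rfl)
      rw [tau_val2 hvv] at this
      simp at this

lemma ewin_no_of_leaf {w : Fin 9} (h3 : 3 ≤ w.val) (hn3 : w.val ≠ 3) (hn7 : w.val ≠ 7) :
    N.EWin true Outcome.no w :=
  IMech.EWin.leaf w (leaf_of h3) (lab_no hn3 hn7)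

/-- B can epistemically force No from either middle node via action 2. -/
lemma ewin_no_mid {v : Fin 9} (hv : v.val = 1 ∨ v.val = 2) :
    N.EWin true Outcome.no v := by
  refine IMech.EWin.known v 2 (dec12 (by omega)) trivial ?_
  rintro w ⟨u, hsim, hw⟩
  obtain ⟨δ, hδ, rfl⟩ := next_elim hw
  have hu : u.val = 1 ∨ u.val = 2 := by
    rcases sim_elim hsim with h | h
    · omega
    · omega
  have hδ2 : (δ true).val = 2 := by rw [hδ]; rfl
  rcases hu with h | h
  · exact ewin_no_of_leaf (by rw [tau_val1 h]; omega) (by rw [tau_val1 h]; omega)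
      (by rw [tau_val1 h]; omega)
  · exact ewin_no_of_leaf (by rw [tau_val2 h]; omega) (by rw [tau_val2 h]; omega)
      (by rw [tau_val2 h]; omega)

lemma ewin_no_root : N.EWin true Outcome.no 0 := by
  refine IMech.EWin.known 0 0 ⟨1, Or.inl ⟨rfl, Or.inl rfl⟩⟩ trivial ?_
  rintro w ⟨u, hsim, hw⟩
  have hu : u.val = 0 := by
    rcases sim_elim hsim with h | h
    · rw [← h]; rfl
    · simp at h
  obtain ⟨δ, hδ, rfl⟩ := next_elim hw
  exact ewin_no_mid (tau_val0 hu δ)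

lemma win_yes_mid {v : Fin 9} (hv : v.val = 1 ∨ v.val = 2) :
    N.toMech.Win true Outcome.yes v := by
  rcases hv with h | h
  · refine Mech.Win.step v 0 (dec12 (by omega)) trivial ?_
    intro u hu
    obtain ⟨δ, hδ, rfl⟩ := next_elim hu
    have : (δ true).val = 0 := by rw [hδ]; rfl
    refine Mech.Win.leaf _ (leaf_of (by rw [tau_val1 h]; omega)) (lab_yes ?_)
    rw [tau_val1 h]; omega
  · refine Mech.Win.step v 1 (dec12 (by omega)) trivial ?_
    intro u hu
    obtain ⟨δ, hδ, rfl⟩ := next_elim hu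
    have : (δ true).val = 1 := by rw [hδ]; rfl
    refine Mech.Win.leaf _ (leaf_of (by rw [tau_val2 h]; omega)) (lab_yes ?_)
    rw [tau_val2 h]; omega

lemma win_yes_root : N.toMech.Win true Outcome.yes 0 := by
  refine Mech.Win.step 0 0 ⟨1, Or.inl ⟨rfl, Or.inl rfl⟩⟩ trivial ?_
  intro u hu
  obtain ⟨δ, hδ, rfl⟩ := next_elim hu
  exact win_yes_mid (tau_val0 rfl δ)

end Stmt18

theorem stmt18 :
    ∃ (V A Act : Type) (M : IMech V A Act),
      M.ElectedSemiEpistemicDictatorship ∧ ¬ M.EpistemicGapFree := by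
  refine ⟨Fin 9, Bool, Fin 3, Stmt18.N, ?_, ?_⟩
  · intro l v hpath hlast hleaf
    have hroot : (0 : Fin 9) ∈ l :=
      List.mem_of_mem_head? (by rw [hpath.1]; rfl)
    exact ⟨0, hroot, true, Outcome.no, Stmt18.ewin_no_root, Stmt18.win_yes_root⟩
  · intro h
    obtain ⟨a, l, _, _, u, _, hdec, hewin⟩ := h 5 (Stmt18.leaf_of (by decide))
    rw [Stmt18.lab_no (v := 5) (by decide) (by decide)] at hewin
    have h1 := Stmt18.ewin_yes hewin
    have h2 := Stmt18.dec_le hdec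
    omega
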